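/- If σ is a permutation of a finite set A whose cycle decomposition consists of a single cycle of length 2^k for some k ≥ 0, then there is exactly one phylogenetic tree on A fixed by σ. -/

import Mathlib

universe u
variable {α β : Type u}

/-- Rooted binary trees with labelled leaves (embedded). -/
inductive RTree (α : Type u) : Type u
  | leaf : α → RTree α
  | node : RTree α → RTree α → RTree α

namespace RTree

def relabel (f : α → β) : RTree α → RTree β
  | .leaf a => .leaf (f a)
  | .node l r => .node (l.relabel f) (r.relabel f)

def leaves : RTree α → Multiset α
  | .leaf a => {a}
  | .node l r => l.leaves + r.leaves

/-- Identification of non-embedded trees: the two children of a node are unordered. -/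
inductive TEquiv : RTree α → RTree α → Prop
  | leaf (a : α) : TEquiv (.leaf a) (.leaf a)
  | node {l r l' r'} : TEquiv l l' → TEquiv r r' → TEquiv (.node l r) (.node l' r')
  | swap {l r l' r'} : TEquiv l r' → TEquiv r l' → TEquiv (.node l r) (.node l' r')

theorem TEquiv.leaves_eq {t t' : RTree α} (h : TEquiv t t') : t.leaves = t'.leaves := by
  induction h with
  | leaf a => rfl
  | node _ _ ih1 ih2 => simp [leaves, ih1, ih2]
  | swap _ _ ih1 ih2 => simp [leaves, ih1, ih2, add_comm]

theorem TEquiv.relabel_congr (f : α → β) {t t' : RTree α} (h : TEquiv t t') :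
    TEquiv (t.relabel f) (t'.relabel f) := by
  induction h with
  | leaf a => exact .leaf _
  | node _ _ ih1 ih2 => exact .node ih1 ih2
  | swap _ _ ih1 ih2 => exact .swap ih1 ih2

end RTree

/-- Phylogenetic (rooted, non-embedded, leaf-labelled) trees with labels in `α`. -/
def PTree (α : Type u) : Type u := Quot (@RTree.TEquiv α)

namespace PTree

def leaves : PTree α → Multiset α :=
  Quot.lift RTree.leaves fun _ _ h => h.leaves_eq

def relabel (f : α → α) : PTree α → PTree α :=
  Quot.lift (fun t => Quot.mk _ (t.relabel f)) fun _ _ h => Quot.sound (h.relabel_congr f)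

end PTree

/-- The phylogenetic trees with leaf label set `A` that are fixed by the relabelling
action of `σ`. -/
def fixedTrees (σ : Equiv.Perm α) (A : Finset α) : Set (PTree α) :=
  {t | t.leaves = A.val ∧ t.relabel σ = t}

/-- The orbit (cycle) of `a` under the permutation `σ`, as a finset. -/
noncomputable def orbitF [Fintype α] (σ : Equiv.Perm α) (a : α) : Finset α := by
  classical exact Finset.univ.filter fun x => σ.SameCycle a x

/-- `∏_{i=2}^{ℓ} (2(λ_i + ⋯ + λ_ℓ) - 1)` where the parts `λ_1 ≥ λ_2 ≥ ⋯ ≥ λ_ℓ` are the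
elements of `m` in non-increasing order: equivalently, the factors are `2 s - 1` where `s`
runs over the sums of the `j` smallest parts, `j = 1, …, ℓ - 1`. -/
def prodFormula (m : Multiset ℕ) : ℕ :=
  ∏ j ∈ Finset.range (m.card - 1), (2 * ((m.sort (· ≤ ·)).take (j + 1)).sum - 1)

/-- `z_λ = ∏_m m^{m_m} · m_m!` where `m_m` is the multiplicity of `m`. -/
def zPart (m : Multiset ℕ) : ℕ :=
  ∏ p ∈ m.toFinset, p ^ m.count p * (m.count p).factorial


section Aux

namespace RTree

theorem TEquiv.refl : ∀ t : RTree α, TEquiv t t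
  | .leaf a => .leaf a
  | .node l r => .node (TEquiv.refl l) (TEquiv.refl r)

theorem TEquiv.symm {t t' : RTree α} (h : TEquiv t t') : TEquiv t' t := by
  induction h with
  | leaf a => exact .leaf a
  | node _ _ ih1 ih2 => exact .node ih1 ih2
  | swap _ _ ih1 ih2 => exact .swap ih2 ih1

theorem TEquiv.trans {t₁ t₂ t₃ : RTree α} (h1 : TEquiv t₁ t₂) (h2 : TEquiv t₂ t₃) :
    TEquiv t₁ t₃ := by
  induction h1 generalizing t₃ with
  | leaf a => exact h2
  | node _ _ ih1 ih2 =>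
    cases h2 with
    | node g1 g2 => exact .node (ih1 g1) (ih2 g2)
    | swap g1 g2 => exact .swap (ih1 g1) (ih2 g2)
  | swap _ _ ih1 ih2 =>
    cases h2 with
    | node g1 g2 => exact .swap (ih1 g2) (ih2 g1)
    | swap g1 g2 => exact .node (ih1 g2) (ih2 g1)

theorem tequiv_equivalence : Equivalence (@TEquiv α) :=
  ⟨TEquiv.refl, TEquiv.symm, TEquiv.trans⟩

theorem tequiv_of_mk_eq {t t' : RTree α}
    (h : Quot.mk TEquiv t = Quot.mk TEquiv t') : TEquiv t t' :=
  (tequiv_equivalence.eqvGen_iff).1 (Quot.eqvGen_exact h)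

theorem leaves_relabel (f : α → β) : ∀ t : RTree α, (t.relabel f).leaves = t.leaves.map f
  | .leaf a => rfl
  | .node l r => by
    simp [relabel, leaves, leaves_relabel f l, leaves_relabel f r]

theorem relabel_relabel (f : α → β) (g : β → β) :
    ∀ t : RTree α, (t.relabel f).relabel g = t.relabel (g ∘ f)
  | .leaf a => rfl
  | .node l r => by simp [relabel, relabel_relabel f g l, relabel_relabel f g r]

theorem leaves_card_pos : ∀ t : RTree α, 0 < Multiset.card t.leaves
  | .leaf a => by simp [leaves]
  | .node l r => by
    simp only [leaves, Multiset.card_add]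
    have := leaves_card_pos l
    omega

end RTree

/-- The balanced binary tree of depth `k` on the orbit of `a`. -/
def bal (σ : Equiv.Perm α) (a : α) : ℕ → RTree α
  | 0 => .leaf a
  | k+1 => .node (bal (σ*σ) a k) (bal (σ*σ) (σ a) k)

/-- The multiset `{a, σ a, …, σ^(n-1) a}`. -/
def orbitN (σ : Equiv.Perm α) (a : α) (n : ℕ) : Multiset α :=
  (Multiset.range n).map (fun i => (σ ^ i) a)

theorem orbitN_card (σ : Equiv.Perm α) (a : α) (n : ℕ) :
    Multiset.card (orbitN σ a n) = n := by simp [orbitN]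

theorem mem_orbitN {σ : Equiv.Perm α} {a x : α} {n : ℕ} :
    x ∈ orbitN σ a n ↔ ∃ i < n, (σ ^ i) a = x := by
  simp [orbitN, Multiset.mem_map, Multiset.mem_range]

theorem rangeTwoMulSplit {β : Type*} (n : ℕ) (f : ℕ → β) :
    (Multiset.range (2*n)).map f
      = (Multiset.range n).map (fun i => f (2*i)) + (Multiset.range n).map (fun i => f (2*i+1)) := by
  induction n with
  | zero => simp
  | succ n ih =>
    rw [show 2*(n+1) = (2*n + 1) + 1 from by ring, Multiset.range_succ, Multiset.map_cons,
      Multiset.range_succ, Multiset.map_cons, ih]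
    simp only [Multiset.range_succ, Multiset.map_cons, Multiset.cons_add, Multiset.add_cons]

theorem orbitN_split (σ : Equiv.Perm α) (a : α) (n : ℕ) :
    orbitN σ a (2*n) = orbitN (σ*σ) a n + orbitN (σ*σ) (σ a) n := by
  show (Multiset.range (2*n)).map (fun i => (σ ^ i) a) = _
  rw [rangeTwoMulSplit]
  congr 1
  · apply Multiset.map_congr rfl
    intro i _
    show (σ ^ (2*i)) a = ((σ*σ) ^ i) a
    rw [← sq, ← pow_mul]
  · apply Multiset.map_congr rfl
    intro i _
    show (σ ^ (2*i+1)) a = ((σ*σ) ^ i) (σ a)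
    rw [pow_succ, Equiv.Perm.mul_apply, ← sq, ← pow_mul]

theorem orbitN_nodup {σ : Equiv.Perm α} {a : α} {n : ℕ}
    (hfree : ∀ d < n, (σ ^ d) a = a → d = 0) : (orbitN σ a n).Nodup := by
  apply Multiset.Nodup.map_on _ (Multiset.nodup_range n)
  intro i hi j hj hij
  rw [Multiset.mem_range] at hi hj
  have main : ∀ i j : ℕ, i ≤ j → j < n → (σ ^ i) a = (σ ^ j) a → i = j := by
    intro i j hle hj hij
    have h1 : (σ ^ i) ((σ ^ (j - i)) a) = (σ ^ i) a := by
      rw [← Equiv.Perm.mul_apply, ← pow_add]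
      rw [show i + (j - i) = j from by omega]
      exact hij.symm
    have h2 : (σ ^ (j - i)) a = a := (Equiv.injective _) h1
    have := hfree (j - i) (by omega) h2
    omega
  rcases Nat.le_total i j with h | h
  · exact main i j h hj hij
  · exact (main j i h hi hij.symm).symm

theorem map_invariant_mem {τ : Equiv.Perm α} {s : Multiset α}
    (hs : Multiset.map (⇑τ) s = s) {x : α} (hx : x ∈ s) (p : ℕ) : (τ ^ p) x ∈ s := by
  induction p with
  | zero => simpa
  | succ p ih =>
    have h2 : τ ((τ ^ p) x) ∈ Multiset.map (⇑τ) s := Multiset.mem_map_of_mem _ ih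
    rw [hs] at h2
    rw [pow_succ', Equiv.Perm.mul_apply]
    exact h2

theorem nofix [DecidableEq α] {σ : Equiv.Perm α} {a : α} {n : ℕ}
    (hfix : (σ ^ n) a = a)
    (hnd : (orbitN σ a n).Nodup)
    {s t : Multiset α} (hst : s + t = orbitN σ a n)
    (hs : Multiset.map (⇑σ) s = s) (hsne : s ≠ 0) (htne : t ≠ 0) : False := by
  obtain ⟨b, hb⟩ := Multiset.exists_mem_of_ne_zero hsne
  obtain ⟨c, hc⟩ := Multiset.exists_mem_of_ne_zero htne
  have hsle : s ≤ orbitN σ a n := hst ▸ Multiset.le_add_right _ _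
  have htle : t ≤ orbitN σ a n := hst ▸ Multiset.le_add_left _ _
  obtain ⟨j, hj, hjb⟩ := mem_orbitN.1 (Multiset.mem_of_le hsle hb)
  obtain ⟨i, hi, hic⟩ := mem_orbitN.1 (Multiset.mem_of_le htle hc)
  rw [← hjb] at hb
  rw [← hic] at hc
  have hmem : (σ ^ i) a ∈ s := by
    have h1 := map_invariant_mem hs hb (i + n - j)
    rw [← Equiv.Perm.mul_apply, ← pow_add] at h1
    rw [show i + n - j + j = i + n from by omega, pow_add, Equiv.Perm.mul_apply, hfix] at h1
    exact h1
  have h1 := (Multiset.nodup_iff_count_le_one.1 hnd) ((σ ^ i) a)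
  rw [← hst, Multiset.count_add] at h1
  have h2 := Multiset.count_pos.2 hmem
  have h3 := Multiset.count_pos.2 hc
  omega

theorem half' [DecidableEq α] {σ : Equiv.Perm α} {a : α} {n : ℕ}
    (hfix : (σ ^ (2*n)) a = a)
    (hnd : (orbitN σ a (2*n)).Nodup)
    {s t : Multiset α} (hst : s + t = orbitN σ a (2*n))
    (hs : Multiset.map (⇑(σ*σ)) s = s) (hsne : s ≠ 0) (htne : t ≠ 0) :
    ∃ r < 2, s = orbitN (σ*σ) ((σ ^ r) a) n := by
  obtain ⟨b, hb⟩ := Multiset.exists_mem_of_ne_zero hsne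
  have hsle : s ≤ orbitN σ a (2*n) := hst ▸ Multiset.le_add_right _ _
  have htle : t ≤ orbitN σ a (2*n) := hst ▸ Multiset.le_add_left _ _
  obtain ⟨j, hj, hjb⟩ := mem_orbitN.1 (Multiset.mem_of_le hsle hb)
  rw [← hjb] at hb
  have hinj : ∀ i < 2*n, ∀ j' < 2*n, (σ ^ i) a = (σ ^ j') a → i = j' := by
    intro i hi j' hj' h
    have := Multiset.inj_on_of_nodup_map (f := fun i => (σ ^ i) a)
      (s := Multiset.range (2*n)) hnd i (by rwa [Multiset.mem_range]) j'
      (by rwa [Multiset.mem_range]) h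
    exact this
  have spread2 : ∀ c d : ℕ, c < 2*n → d < 2*n → c % 2 = d % 2 → (σ ^ c) a ∈ s →
      (σ ^ d) a ∈ s := by
    intro c d hc hd hparity hcs
    have h1 := map_invariant_mem hs hcs ((d + 2*n - c)/2)
    have h2 : ∀ p : ℕ, ((σ*σ) ^ p) ((σ ^ c) a) = (σ ^ (c + 2*p)) a := by
      intro p
      rw [← sq, ← pow_mul, ← Equiv.Perm.mul_apply, ← pow_add, Nat.add_comm]
    rw [h2, show c + 2*((d + 2*n - c)/2) = d + 2*n from by omega,
      pow_add, Equiv.Perm.mul_apply, hfix] at h1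
    exact h1
  have hins : ∀ i < 2*n, i % 2 = j % 2 → (σ ^ i) a ∈ s := by
    intro i hi hp
    exact spread2 j i hj hi hp.symm hb
  have hnotin : ∀ i < 2*n, (σ ^ i) a ∈ s → i % 2 = j % 2 := by
    intro i hi his
    by_contra hne
    have hall : ∀ d < 2*n, (σ ^ d) a ∈ s := by
      intro d hd
      have : d % 2 = j % 2 ∨ d % 2 = i % 2 := by omega
      rcases this with h | h
      · exact hins d hd h
      · exact spread2 i d hi hd h.symm his
    obtain ⟨c, hc⟩ := Multiset.exists_mem_of_ne_zero htne
    obtain ⟨i0, hi0, hic⟩ := mem_orbitN.1 (Multiset.mem_of_le htle hc)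
    rw [← hic] at hc
    have h1 := (Multiset.nodup_iff_count_le_one.1 hnd) ((σ ^ i0) a)
    rw [← hst, Multiset.count_add] at h1
    have h2 := Multiset.count_pos.2 (hall i0 hi0)
    have h3 := Multiset.count_pos.2 hc
    omega
  have helem : ∀ m : ℕ, ((σ*σ) ^ m) ((σ ^ (j % 2)) a) = (σ ^ (2*m + j % 2)) a := by
    intro m
    rw [← sq, ← pow_mul, ← Equiv.Perm.mul_apply, ← pow_add]
  have hEnd : (orbitN (σ*σ) ((σ ^ (j % 2)) a) n).Nodup := by
    apply Multiset.Nodup.map_on _ (Multiset.nodup_range n)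
    intro x hx y hy hxy
    rw [Multiset.mem_range] at hx hy
    rw [helem, helem] at hxy
    have := hinj _ (by omega) _ (by omega) hxy
    omega
  refine ⟨j % 2, by omega, ?_⟩
  refine Multiset.ext.2 fun x => ?_
  by_cases hxE : x ∈ orbitN (σ*σ) ((σ ^ (j % 2)) a) n
  · obtain ⟨m, hm, hxm⟩ := mem_orbitN.1 hxE
    rw [helem] at hxm
    have hxs : x ∈ s := hxm ▸ hins (2*m + j % 2) (by omega) (by omega)
    have h1 : Multiset.count x s ≤ Multiset.count x (orbitN σ a (2*n)) :=
      Multiset.le_iff_count.1 hsle x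
    have h2 := (Multiset.nodup_iff_count_le_one.1 hnd) x
    have h3 : Multiset.count x (orbitN (σ*σ) ((σ ^ (j % 2)) a) n) = 1 :=
      Multiset.count_eq_one_of_mem hEnd hxE
    have h4 := Multiset.count_pos.2 hxs
    omega
  · rw [Multiset.count_eq_zero.2 hxE, Multiset.count_eq_zero]
    intro hxs
    obtain ⟨i, hi, hix⟩ := mem_orbitN.1 (Multiset.mem_of_le hsle hxs)
    rw [← hix] at hxs
    have hpar := hnotin i hi hxs
    apply hxE
    rw [mem_orbitN]
    refine ⟨i/2, by omega, ?_⟩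
    rw [helem, show 2*(i/2) + j % 2 = i from by omega, hix]

theorem bal_leaves (σ : Equiv.Perm α) (a : α) (k : ℕ) :
    (bal σ a k).leaves = orbitN σ a (2^k) := by
  induction k generalizing σ a with
  | zero =>
    show RTree.leaves (.leaf a) = orbitN σ a (2^0)
    rw [pow_zero, orbitN, show Multiset.range 1 = {0} from by
      rw [Multiset.range_succ, Multiset.range_zero]; rfl]
    simp [RTree.leaves]
  | succ k ih =>
    show (bal (σ*σ) a k).leaves + (bal (σ*σ) (σ a) k).leaves = _
    rw [ih, ih, show (2:ℕ)^(k+1) = 2*2^k from by rw [pow_succ]; ring, orbitN_split]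

theorem bal_relabel (f σ : Equiv.Perm α) (a : α) (k : ℕ) :
    (bal σ a k).relabel (⇑f) = bal (f*σ*f⁻¹) (f a) k := by
  induction k generalizing σ a with
  | zero => rfl
  | succ k ih =>
    show RTree.node ((bal (σ*σ) a k).relabel (⇑f)) ((bal (σ*σ) (σ a) k).relabel (⇑f)) = _
    rw [ih, ih]
    have hg : (f*σ*f⁻¹)*(f*σ*f⁻¹) = f*(σ*σ)*f⁻¹ := by group
    have ha : (f*σ*f⁻¹) (f a) = f (σ a) := by simp [Equiv.Perm.mul_apply]
    show _ = RTree.node (bal ((f*σ*f⁻¹)*(f*σ*f⁻¹)) (f a) k)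
      (bal ((f*σ*f⁻¹)*(f*σ*f⁻¹)) ((f*σ*f⁻¹) (f a)) k)
    rw [hg, ha]

theorem pow_two_mul_apply (σ : Equiv.Perm α) (m : ℕ) (x : α) :
    ((σ*σ) ^ m) x = (σ ^ (2*m)) x := by
  rw [← sq, ← pow_mul]

theorem bal_fix {σ : Equiv.Perm α} {a : α} {k : ℕ} (hfix : (σ ^ (2^k)) a = a) :
    RTree.TEquiv (bal σ (σ a) k) (bal σ a k) := by
  induction k generalizing σ a with
  | zero =>
    have : σ a = a := by simpa using hfix
    rw [show bal σ (σ a) 0 = RTree.leaf (σ a) from rfl, this]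
    exact .leaf a
  | succ k ih =>
    have hfix2 : ((σ*σ) ^ (2^k)) a = a := by
      rw [pow_two_mul_apply, show 2*2^k = 2^(k+1) from by rw [pow_succ]; ring]
      exact hfix
    show RTree.TEquiv (RTree.node (bal (σ*σ) (σ a) k) (bal (σ*σ) (σ (σ a)) k))
      (RTree.node (bal (σ*σ) a k) (bal (σ*σ) (σ a) k))
    refine .swap (RTree.TEquiv.refl _) ?_
    have := ih (σ := σ*σ) (a := a) hfix2
    exact this

end Aux


theorem key [DecidableEq α] (k : ℕ) :
    ∀ (σ : Equiv.Perm α) (a : α) (t : RTree α),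
    (σ ^ (2^k)) a = a →
    (orbitN σ a (2^k)).Nodup →
    t.leaves = orbitN σ a (2^k) →
    RTree.TEquiv (t.relabel ⇑σ) t →
    RTree.TEquiv t (bal σ a k) := by
  induction k with
  | zero =>
    intro σ a t _ _ hleaves _
    cases t with
    | leaf b =>
      have hb : b = a := by
        have : ({b} : Multiset α) = orbitN σ a (2^0) := hleaves
        rw [pow_zero, orbitN, show Multiset.range 1 = {0} from by
          rw [Multiset.range_succ, Multiset.range_zero]; rfl] at this
        simpa using this
      rw [hb]
      exact .leaf a
    | node l r =>
      exfalso
      have hcard := congrArg Multiset.card hleaves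
      rw [orbitN_card, pow_zero] at hcard
      have h1 := RTree.leaves_card_pos l
      have h2 := RTree.leaves_card_pos r
      have : Multiset.card (RTree.leaves (RTree.node l r))
          = Multiset.card l.leaves + Multiset.card r.leaves := by
        simp [RTree.leaves]
      omega
  | succ k ih =>
    intro σ a t hfix hnd hleaves hrel
    have e2 : (2:ℕ)^(k+1) = 2*2^k := by rw [pow_succ]; ring
    have hfix' : (σ ^ (2*2^k)) a = a := by rw [← e2]; exact hfix
    have hnd' : (orbitN σ a (2*2^k)).Nodup := by rw [← e2]; exact hnd
    have hfix2a : ((σ*σ) ^ (2^k)) a = a := by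
      rw [pow_two_mul_apply, ← e2]; exact hfix
    have hfix2b : ((σ*σ) ^ (2^k)) (σ a) = σ a := by
      rw [pow_two_mul_apply]
      have : (σ ^ (2*2^k)) (σ a) = σ ((σ ^ (2*2^k)) a) := by
        rw [← Equiv.Perm.mul_apply, ← Equiv.Perm.mul_apply, ← pow_succ, pow_succ']
      rw [this, hfix']
    have hndsplit := hnd'
    rw [orbitN_split] at hndsplit
    obtain ⟨hndE, hndO, _⟩ := Multiset.nodup_add.1 hndsplit
    cases t with
    | leaf b =>
      exfalso
      have hcard := congrArg Multiset.card hleaves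
      rw [orbitN_card] at hcard
      have : Multiset.card (RTree.leaves (RTree.leaf b)) = 1 := rfl
      have h2 : 2 ≤ 2^(k+1) := by
        calc 2 = 2^1 := rfl
        _ ≤ 2^(k+1) := Nat.pow_le_pow_right (by omega) (by omega)
      omega
    | node l r =>
      have hleaves' : l.leaves + r.leaves = orbitN σ a (2*2^k) := by
        rw [← e2]; exact hleaves
      have hlne : l.leaves ≠ 0 := by
        have := RTree.leaves_card_pos l
        intro h; rw [h] at this; simp at this
      have hrne : r.leaves ≠ 0 := by
        have := RTree.leaves_card_pos r
        intro h; rw [h] at this; simp at this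
      have hrelnode : RTree.TEquiv
          (RTree.node (l.relabel ⇑σ) (r.relabel ⇑σ)) (RTree.node l r) := hrel
      cases hrelnode with
      | node h1 h2 =>
        exfalso
        have hlmap : Multiset.map (⇑σ) l.leaves = l.leaves := by
          rw [← RTree.leaves_relabel]; exact h1.leaves_eq
        exact nofix hfix' hnd' hleaves' hlmap hlne hrne
      | swap h1 h2 =>
        -- h1 : TEquiv (l.relabel σ) r, h2 : TEquiv (r.relabel σ) l
        have hcomp : ∀ u : RTree α, (u.relabel ⇑σ).relabel ⇑σ = u.relabel ⇑(σ*σ) := by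
          intro u
          rw [RTree.relabel_relabel]
          congr 1
        have hl2 : RTree.TEquiv (l.relabel ⇑(σ*σ)) l := by
          have := (h1.relabel_congr ⇑σ).trans h2
          rwa [hcomp] at this
        have hr2 : RTree.TEquiv (r.relabel ⇑(σ*σ)) r := by
          have := (h2.relabel_congr ⇑σ).trans h1
          rwa [hcomp] at this
        have hlmap : Multiset.map (⇑(σ*σ)) l.leaves = l.leaves := by
          rw [← RTree.leaves_relabel]; exact hl2.leaves_eq
        obtain ⟨r', hr'2, hsl⟩ := half' hfix' hnd' hleaves' hlmap hlne hrne
        have hsplit : l.leaves + r.leaves = orbitN (σ*σ) a (2^k) + orbitN (σ*σ) (σ a) (2^k) := by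
          rw [← orbitN_split]; exact hleaves'
        interval_cases r'
        · rw [pow_zero, Equiv.Perm.one_apply] at hsl
          have hrl : r.leaves = orbitN (σ*σ) (σ a) (2^k) := by
            rw [hsl] at hsplit
            exact add_left_cancel hsplit
          have ihl := ih (σ*σ) a l hfix2a hndE hsl hl2
          have ihr := ih (σ*σ) (σ a) r hfix2b hndO hrl hr2
          exact .node ihl ihr
        · rw [pow_one] at hsl
          have hrl : r.leaves = orbitN (σ*σ) a (2^k) := by
            rw [hsl, add_comm (orbitN (σ*σ) a (2^k))] at hsplit
            exact add_left_cancel hsplit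
          have ihl := ih (σ*σ) (σ a) l hfix2b hndO hsl hl2
          have ihr := ih (σ*σ) a r hfix2a hndE hrl hr2
          exact .swap ihl ihr

/-- If the cycle decomposition of σ consists of a single cycle of length
2^k (i.e. the cycle type of σ is the one-part partition (2^k), covering all of A), then
exactly one phylogenetic tree on A is fixed by σ. -/
theorem stmt1 {α : Type} [Fintype α] [DecidableEq α] (σ : Equiv.Perm α) (k : ℕ)
    (hcyc : σ.partition.parts = {2 ^ k}) :
    (fixedTrees σ Finset.univ).ncard = 1 := by
  classical
  have hsum : σ.partition.parts.sum = Fintype.card α := σ.partition.parts_sum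
  rw [hcyc, Multiset.sum_singleton] at hsum
  have hpos : 0 < Fintype.card α := by rw [← hsum]; positivity
  have : Nonempty α := Fintype.card_pos_iff.1 hpos
  obtain ⟨a⟩ := this
  have hff : (σ ^ (2^k)) a = a ∧ ∀ d < 2^k, (σ ^ d) a = a → d = 0 := by
    by_cases hk : k = 0
    · subst hk
      have hsub : Subsingleton α := Fintype.card_le_one_iff_subsingleton.1 (by omega)
      refine ⟨Subsingleton.elim _ _, ?_⟩
      intro d hd _
      omega
    · have h1lt : 1 < 2^k := by
        calc 1 < 2^1 := by omega
        _ ≤ 2^k := Nat.pow_le_pow_right (by omega) (by omega)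
      have hp := Equiv.Perm.parts_partition (σ := σ)
      rw [hcyc] at hp
      have hct : σ.cycleType = {2^k} := by
        rcases Nat.eq_zero_or_pos (Fintype.card α - σ.support.card) with h | h
        · rw [h] at hp; simpa using hp.symm
        · exfalso
          have h1mem : (1:ℕ) ∈ σ.cycleType + Multiset.replicate (Fintype.card α - σ.support.card) 1 := by
            rw [Multiset.mem_add]
            right
            exact Multiset.mem_replicate.2 ⟨by omega, rfl⟩
          rw [← hp, Multiset.mem_singleton] at h1mem
          omega
      have hcycle : σ.IsCycle := Equiv.Perm.card_cycleType_eq_one.1 (by rw [hct]; rfl)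
      have hsupp : σ.support.card = 2^k := by
        rw [← Equiv.Perm.sum_cycleType, hct, Multiset.sum_singleton]
      have horder : orderOf σ = 2^k := by rw [hcycle.orderOf, hsupp]
      have hsuppuniv : σ.support = Finset.univ :=
        Finset.eq_univ_of_card _ (by rw [hsupp, hsum])
      have ha : σ a ≠ a := by
        have : a ∈ σ.support := hsuppuniv ▸ Finset.mem_univ a
        exact Equiv.Perm.mem_support.1 this
      constructor
      · rw [← horder, pow_orderOf_eq_one]; rfl
      · intro d hd hda
        have hpow : σ ^ d = 1 := (hcycle.pow_eq_one_iff' ha).2 hda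
        have := orderOf_dvd_of_pow_eq_one hpow
        rw [horder] at this
        exact Nat.eq_zero_of_dvd_of_lt this hd
  obtain ⟨hfix, hfree⟩ := hff
  have hnd : (orbitN σ a (2^k)).Nodup := orbitN_nodup hfree
  have huniv : (Finset.univ : Finset α).val = orbitN σ a (2^k) := by
    have h1 : (⟨orbitN σ a (2^k), hnd⟩ : Finset α) = Finset.univ :=
      Finset.eq_univ_of_card _ (by simp [orbitN_card, hsum])
    exact (congrArg Finset.val h1).symm
  have hset : fixedTrees σ Finset.univ = {Quot.mk _ (bal σ a k)} := by
    ext t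
    constructor
    · rintro ⟨hlv, hfx⟩
      obtain ⟨t₁, rfl⟩ := Quot.exists_rep t
      have hlv' : t₁.leaves = orbitN σ a (2^k) := by rw [← huniv]; exact hlv
      have hfx' : RTree.TEquiv (t₁.relabel ⇑σ) t₁ := RTree.tequiv_of_mk_eq hfx
      exact Quot.sound (key k σ a t₁ hfix hnd hlv' hfx')
    · rintro rfl
      refine ⟨?_, ?_⟩
      · show (bal σ a k).leaves = (Finset.univ : Finset α).val
        rw [bal_leaves, huniv]
      · show Quot.mk _ ((bal σ a k).relabel ⇑σ) = Quot.mk _ (bal σ a k)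
        apply Quot.sound
        rw [bal_relabel, show σ*σ*σ⁻¹ = σ from by group]
        exact bal_fix hfix
  rw [hset]
  exact Set.ncard_singleton (Quot.mk _ (bal σ a k) : PTree α)
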